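/- arXiv:1807.02185 — 2 statements merged into one kernel-verified Lean document; each statement's English description precedes it below -/
import Mathlib

section
/- Let σ ∈ {1,−1} and let u, v : ℝ × ℝ → ℂ be twice continuously differentiable, and define w(x,t) = u(−x,t) and s(x,t) = v(−x,t). Then (u,v,w,s) satisfies the four-component coupled NLS system for all (x,t) ∈ ℝ² if and only if (u,v) satisfies the reverse-space nonlocal Manakov system: i·uₜ(x,t) + uₓₓ(x,t) + 2σ[|u(x,t)|²+|u(−x,t)|²+|v(x,t)|²+|v(−x,t)|²]u(x,t) = 0 and i·vₜ(x,t) + vₓₓ(x,t) + 2σ[|u(x,t)|²+|u(−x,t)|²+|v(x,t)|²+|v(−x,t)|²]v(x,t) = 0 for all (x,t) ∈ ℝ². -/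
open Complex

/-- Partial derivative in the second (time) variable. -/
noncomputable def dt (f : ℝ × ℝ → ℂ) (x t : ℝ) : ℂ :=
  deriv (fun τ : ℝ => f (x, τ)) t

/-- Second partial derivative in the first (space) variable. -/
noncomputable def dxx (f : ℝ × ℝ → ℂ) (x t : ℝ) : ℂ :=
  deriv (deriv (fun y : ℝ => f (y, t))) x

/-! The reflected fields `w(x,t) = u(-x,t)`, `s(x,t) = v(-x,t)` satisfy the NLS equation at `x`
exactly when `u`, `v` satisfy it at `-x`: the time derivative and the second space derivative
commute with the reflection `x ↦ -x` (the two sign changes of `∂ₓ` cancel), and the total intensity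
`|u|² + |v|² + |w|² + |s|²` is even in `x`. So the last two equations of the four-component system
are the first two evaluated at `-x`, and they reduce to the reverse-space nonlocal Manakov system. -/

theorem deriv_deriv_comp_neg {𝕜 F : Type*} [NontriviallyNormedField 𝕜] [NormedAddCommGroup F]
    [NormedSpace 𝕜 F] (f : 𝕜 → F) (a : 𝕜) :
    deriv (deriv fun x => f (-x)) a = deriv (deriv f) (-a) := by
  simpa [iteratedDeriv_succ, iteratedDeriv_one] using iteratedDeriv_comp_neg 2 f a

section Reflection

variable {u w : ℝ × ℝ → ℂ}

theorem dt_eq_of_reflect (hw : ∀ x t, w (x, t) = u (-x, t)) (x t : ℝ) :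
    dt w x t = dt u (-x) t := by
  simp only [dt, hw]

theorem dxx_eq_of_reflect (hw : ∀ x t, w (x, t) = u (-x, t)) (x t : ℝ) :
    dxx w x t = dxx u (-x) t := by
  simp only [dxx, hw]
  exact deriv_deriv_comp_neg (fun y => u (y, t)) x

noncomputable def nlsResidual (σ : ℝ) (ρ : ℝ → ℝ → ℝ) (q : ℝ × ℝ → ℂ) (x t : ℝ) : ℂ :=
  I * dt q x t + dxx q x t + 2 * (σ : ℂ) * (ρ x t : ℂ) * q (x, t)

theorem nlsResidual_eq_of_reflect {σ : ℝ} {ρ : ℝ → ℝ → ℝ} (hρ : ∀ x t, ρ (-x) t = ρ x t)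
    (hw : ∀ x t, w (x, t) = u (-x, t)) (x t : ℝ) :
    nlsResidual σ ρ w x t = nlsResidual σ ρ u (-x) t := by
  rw [nlsResidual, nlsResidual, dt_eq_of_reflect hw, dxx_eq_of_reflect hw, hw, hρ]

end Reflection

theorem forall_nlsResidual_eq_zero_reflect_iff {σ : ℝ} {ρ : ℝ → ℝ → ℝ}
    (hρ : ∀ x t, ρ (-x) t = ρ x t) {u v w s : ℝ × ℝ → ℂ}
    (hw : ∀ x t, w (x, t) = u (-x, t)) (hs : ∀ x t, s (x, t) = v (-x, t)) :
    (∀ x t, nlsResidual σ ρ u x t = 0 ∧ nlsResidual σ ρ v x t = 0 ∧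
        nlsResidual σ ρ w x t = 0 ∧ nlsResidual σ ρ s x t = 0) ↔
      ∀ x t, nlsResidual σ ρ u x t = 0 ∧ nlsResidual σ ρ v x t = 0 := by
  simp only [nlsResidual_eq_of_reflect hρ hw, nlsResidual_eq_of_reflect hρ hs]
  refine ⟨fun h x t => ⟨(h x t).1, (h x t).2.1⟩, fun h x t => ⟨(h x t).1, (h x t).2, ?_⟩⟩
  exact h (-x) t

noncomputable def reverseSpacePotential (u v : ℝ × ℝ → ℂ) (x t : ℝ) : ℝ :=
  ‖u (x, t)‖ ^ 2 + ‖u (-x, t)‖ ^ 2 + ‖v (x, t)‖ ^ 2 + ‖v (-x, t)‖ ^ 2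

theorem reverseSpacePotential_neg (u v : ℝ × ℝ → ℂ) (x t : ℝ) :
    reverseSpacePotential u v (-x) t = reverseSpacePotential u v x t := by
  rw [reverseSpacePotential, reverseSpacePotential, neg_neg]
  ring

theorem four_component_iff_reverse_space_nonlocal_Manakov_general
    (σ : ℝ)
    (u v : ℝ × ℝ → ℂ)
    (w s : ℝ × ℝ → ℂ)
    (hw : ∀ x t : ℝ, w (x, t) = u (-x, t))
    (hs : ∀ x t : ℝ, s (x, t) = v (-x, t)) :
    (∀ x t : ℝ,
      (I * dt u x t + dxx u x t +
        2 * (σ : ℂ) * ((‖u (x, t)‖ ^ 2 + ‖v (x, t)‖ ^ 2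
          + ‖w (x, t)‖ ^ 2 + ‖s (x, t)‖ ^ 2 : ℝ) : ℂ) * u (x, t) = 0)
      ∧
      (I * dt v x t + dxx v x t +
        2 * (σ : ℂ) * ((‖u (x, t)‖ ^ 2 + ‖v (x, t)‖ ^ 2
          + ‖w (x, t)‖ ^ 2 + ‖s (x, t)‖ ^ 2 : ℝ) : ℂ) * v (x, t) = 0)
      ∧
      (I * dt w x t + dxx w x t +
        2 * (σ : ℂ) * ((‖u (x, t)‖ ^ 2 + ‖v (x, t)‖ ^ 2
          + ‖w (x, t)‖ ^ 2 + ‖s (x, t)‖ ^ 2 : ℝ) : ℂ) * w (x, t) = 0)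
      ∧
      (I * dt s x t + dxx s x t +
        2 * (σ : ℂ) * ((‖u (x, t)‖ ^ 2 + ‖v (x, t)‖ ^ 2
          + ‖w (x, t)‖ ^ 2 + ‖s (x, t)‖ ^ 2 : ℝ) : ℂ) * s (x, t) = 0))
    ↔
    (∀ x t : ℝ,
      (I * dt u x t + dxx u x t +
        2 * (σ : ℂ) * ((‖u (x, t)‖ ^ 2 + ‖u (-x, t)‖ ^ 2
          + ‖v (x, t)‖ ^ 2 + ‖v (-x, t)‖ ^ 2 : ℝ) : ℂ) * u (x, t) = 0)
      ∧
      (I * dt v x t + dxx v x t +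
        2 * (σ : ℂ) * ((‖u (x, t)‖ ^ 2 + ‖u (-x, t)‖ ^ 2
          + ‖v (x, t)‖ ^ 2 + ‖v (-x, t)‖ ^ 2 : ℝ) : ℂ) * v (x, t) = 0)) := by
  have hρ : ∀ x t, ‖u (x, t)‖ ^ 2 + ‖v (x, t)‖ ^ 2 + ‖w (x, t)‖ ^ 2 + ‖s (x, t)‖ ^ 2
      = reverseSpacePotential u v x t := by
    intro x t
    rw [hw, hs, reverseSpacePotential]
    ring
  simp only [hρ]
  exact forall_nlsResidual_eq_zero_reflect_iff (reverseSpacePotential_neg u v) hw hs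

theorem four_component_iff_reverse_space_nonlocal_Manakov
    (σ : ℝ) (hσ : σ = 1 ∨ σ = -1)
    (u v : ℝ × ℝ → ℂ) (hu : ContDiff ℝ 2 u) (hvC : ContDiff ℝ 2 v)
    (w s : ℝ × ℝ → ℂ)
    (hw : ∀ x t : ℝ, w (x, t) = u (-x, t))
    (hs : ∀ x t : ℝ, s (x, t) = v (-x, t)) :
    (∀ x t : ℝ,
      (I * dt u x t + dxx u x t +
        2 * (σ : ℂ) * ((‖u (x, t)‖ ^ 2 + ‖v (x, t)‖ ^ 2
          + ‖w (x, t)‖ ^ 2 + ‖s (x, t)‖ ^ 2 : ℝ) : ℂ) * u (x, t) = 0)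
      ∧
      (I * dt v x t + dxx v x t +
        2 * (σ : ℂ) * ((‖u (x, t)‖ ^ 2 + ‖v (x, t)‖ ^ 2
          + ‖w (x, t)‖ ^ 2 + ‖s (x, t)‖ ^ 2 : ℝ) : ℂ) * v (x, t) = 0)
      ∧
      (I * dt w x t + dxx w x t +
        2 * (σ : ℂ) * ((‖u (x, t)‖ ^ 2 + ‖v (x, t)‖ ^ 2
          + ‖w (x, t)‖ ^ 2 + ‖s (x, t)‖ ^ 2 : ℝ) : ℂ) * w (x, t) = 0)
      ∧
      (I * dt s x t + dxx s x t +
        2 * (σ : ℂ) * ((‖u (x, t)‖ ^ 2 + ‖v (x, t)‖ ^ 2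
          + ‖w (x, t)‖ ^ 2 + ‖s (x, t)‖ ^ 2 : ℝ) : ℂ) * s (x, t) = 0))
    ↔
    (∀ x t : ℝ,
      (I * dt u x t + dxx u x t +
        2 * (σ : ℂ) * ((‖u (x, t)‖ ^ 2 + ‖u (-x, t)‖ ^ 2
          + ‖v (x, t)‖ ^ 2 + ‖v (-x, t)‖ ^ 2 : ℝ) : ℂ) * u (x, t) = 0)
      ∧
      (I * dt v x t + dxx v x t +
        2 * (σ : ℂ) * ((‖u (x, t)‖ ^ 2 + ‖u (-x, t)‖ ^ 2
          + ‖v (x, t)‖ ^ 2 + ‖v (-x, t)‖ ^ 2 : ℝ) : ℂ) * v (x, t) = 0)) :=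
  four_component_iff_reverse_space_nonlocal_Manakov_general σ u v w s hw hs
end

section
/- Let σ ∈ {1,−1} and let u, v : ℝ × ℝ → ℂ be twice continuously differentiable, and define w(x,t) = conj(u(−x,−t)) and s(x,t) = conj(v(−x,−t)). Then (u,v,w,s) satisfies the four-component coupled NLS system for all (x,t) ∈ ℝ² if and only if (u,v) satisfies the reverse-space-time nonlocal Manakov system: i·uₜ(x,t) + uₓₓ(x,t) + 2σ[|u(x,t)|²+|u(−x,−t)|²+|v(x,t)|²+|v(−x,−t)|²]u(x,t) = 0 and i·vₜ(x,t) + vₓₓ(x,t) + 2σ[|u(x,t)|²+|u(−x,−t)|²+|v(x,t)|²+|v(−x,−t)|²]v(x,t) = 0 for all (x,t) ∈ ℝ². -/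
/-!
Since `‖conj z‖ = ‖z‖`, the potential `|u|² + |v|² + |w|² + |s|²` of the four-component system
is the nonlocal one, which is real and invariant under `(x, t) ↦ (-x, -t)`. The operator
`q ↦ i qₜ + qₓₓ` commutes with `q ↦ conj (q (-x, -t))` (the sign from `t ↦ -t` is undone by
`conj i = -i`), so the `w` and `s` equations at `(x, t)` are the conjugates of the `u` and `v`
equations at `(-x, -t)`.
-/

open Complex

open ComplexConjugate

section ReflectedStar

variable {F : Type*} [NormedAddCommGroup F] [NormedSpace ℝ F] [StarAddMonoid F]
  [StarModule ℝ F] [ContinuousStar F]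

theorem deriv_star_comp_neg (f : ℝ → F) (x : ℝ) :
    deriv (fun y => star (f (-y))) x = -star (deriv f (-x)) := by
  rw [deriv.star, deriv_comp_neg, star_neg]

theorem deriv_deriv_star_comp_neg (f : ℝ → F) (x : ℝ) :
    deriv (deriv fun y => star (f (-y))) x = star (deriv (deriv f) (-x)) := by
  simp only [funext (deriv_star_comp_neg f), deriv.fun_neg, deriv_star_comp_neg, neg_neg]

end ReflectedStar

section ParityTime

variable {u w : ℝ × ℝ → ℂ}

theorem dt_of_eq_conj_comp_neg (hw : ∀ x t : ℝ, w (x, t) = conj (u (-x, -t))) (x t : ℝ) :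
    dt w x t = -conj (dt u (-x) (-t)) := by
  simp only [dt, hw, starRingEnd_apply]
  exact deriv_star_comp_neg (fun τ => u (-x, τ)) t

theorem dxx_of_eq_conj_comp_neg (hw : ∀ x t : ℝ, w (x, t) = conj (u (-x, -t))) (x t : ℝ) :
    dxx w x t = conj (dxx u (-x) (-t)) := by
  simp only [dxx, hw, starRingEnd_apply]
  exact deriv_deriv_star_comp_neg (fun y => u (y, -t)) x

theorem schrodinger_of_eq_conj_comp_neg (hw : ∀ x t : ℝ, w (x, t) = conj (u (-x, -t)))
    (c : ℂ) (x t : ℝ) :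
    I * dt w x t + dxx w x t + c * w (x, t)
      = conj (I * dt u (-x) (-t) + dxx u (-x) (-t) + conj c * u (-x, -t)) := by
  rw [dt_of_eq_conj_comp_neg hw, dxx_of_eq_conj_comp_neg hw, hw]
  simp only [map_add, map_mul, conj_I, conj_conj]
  ring

end ParityTime

theorem four_component_iff_reverse_space_time_nonlocal_Manakov_general
    (σ : ℝ)
    (u v : ℝ × ℝ → ℂ)
    (w s : ℝ × ℝ → ℂ)
    (hw : ∀ x t : ℝ, w (x, t) = (starRingEnd ℂ) (u (-x, -t)))
    (hs : ∀ x t : ℝ, s (x, t) = (starRingEnd ℂ) (v (-x, -t))) :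
    (∀ x t : ℝ,
      (I * dt u x t + dxx u x t +
        2 * (σ : ℂ) * ((‖u (x, t)‖ ^ 2 + ‖v (x, t)‖ ^ 2
          + ‖w (x, t)‖ ^ 2 + ‖s (x, t)‖ ^ 2 : ℝ) : ℂ) * u (x, t) = 0)
      ∧
      (I * dt v x t + dxx v x t +
        2 * (σ : ℂ) * ((‖u (x, t)‖ ^ 2 + ‖v (x, t)‖ ^ 2
          + ‖w (x, t)‖ ^ 2 + ‖s (x, t)‖ ^ 2 : ℝ) : ℂ) * v (x, t) = 0)
      ∧
      (I * dt w x t + dxx w x t +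
        2 * (σ : ℂ) * ((‖u (x, t)‖ ^ 2 + ‖v (x, t)‖ ^ 2
          + ‖w (x, t)‖ ^ 2 + ‖s (x, t)‖ ^ 2 : ℝ) : ℂ) * w (x, t) = 0)
      ∧
      (I * dt s x t + dxx s x t +
        2 * (σ : ℂ) * ((‖u (x, t)‖ ^ 2 + ‖v (x, t)‖ ^ 2
          + ‖w (x, t)‖ ^ 2 + ‖s (x, t)‖ ^ 2 : ℝ) : ℂ) * s (x, t) = 0))
    ↔
    (∀ x t : ℝ,
      (I * dt u x t + dxx u x t +
        2 * (σ : ℂ) * ((‖u (x, t)‖ ^ 2 + ‖u (-x, -t)‖ ^ 2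
          + ‖v (x, t)‖ ^ 2 + ‖v (-x, -t)‖ ^ 2 : ℝ) : ℂ) * u (x, t) = 0)
      ∧
      (I * dt v x t + dxx v x t +
        2 * (σ : ℂ) * ((‖u (x, t)‖ ^ 2 + ‖u (-x, -t)‖ ^ 2
          + ‖v (x, t)‖ ^ 2 + ‖v (-x, -t)‖ ^ 2 : ℝ) : ℂ) * v (x, t) = 0)) := by
  have hN : ∀ x t : ℝ,
      (‖u (x, t)‖ ^ 2 + ‖v (x, t)‖ ^ 2 + ‖w (x, t)‖ ^ 2 + ‖s (x, t)‖ ^ 2 : ℝ)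
        = ‖u (x, t)‖ ^ 2 + ‖u (-x, -t)‖ ^ 2 + ‖v (x, t)‖ ^ 2 + ‖v (-x, -t)‖ ^ 2 := by
    intro x t
    rw [hw, hs, norm_conj, norm_conj]
    ring
  have hN_conj : ∀ x t : ℝ,
      conj (2 * (σ : ℂ) * ((‖u (x, t)‖ ^ 2 + ‖u (-x, -t)‖ ^ 2
        + ‖v (x, t)‖ ^ 2 + ‖v (-x, -t)‖ ^ 2 : ℝ) : ℂ))
        = 2 * (σ : ℂ) * ((‖u (-x, -t)‖ ^ 2 + ‖u (-(-x), -(-t))‖ ^ 2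
          + ‖v (-x, -t)‖ ^ 2 + ‖v (-(-x), -(-t))‖ ^ 2 : ℝ) : ℂ) := by
    intro x t
    simp only [map_mul, conj_ofReal, map_ofNat, neg_neg]
    push_cast
    ring
  simp only [hN]
  refine ⟨fun h x t => ⟨(h x t).1, (h x t).2.1⟩, fun h x t => ⟨(h x t).1, (h x t).2, ?_, ?_⟩⟩
  · rw [schrodinger_of_eq_conj_comp_neg hw, hN_conj, (h (-x) (-t)).1, map_zero]
  · rw [schrodinger_of_eq_conj_comp_neg hs, hN_conj, (h (-x) (-t)).2, map_zero]

theorem four_component_iff_reverse_space_time_nonlocal_Manakov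
    (σ : ℝ) (hσ : σ = 1 ∨ σ = -1)
    (u v : ℝ × ℝ → ℂ) (hu : ContDiff ℝ 2 u) (hvC : ContDiff ℝ 2 v)
    (w s : ℝ × ℝ → ℂ)
    (hw : ∀ x t : ℝ, w (x, t) = (starRingEnd ℂ) (u (-x, -t)))
    (hs : ∀ x t : ℝ, s (x, t) = (starRingEnd ℂ) (v (-x, -t))) :
    (∀ x t : ℝ,
      (I * dt u x t + dxx u x t +
        2 * (σ : ℂ) * ((‖u (x, t)‖ ^ 2 + ‖v (x, t)‖ ^ 2
          + ‖w (x, t)‖ ^ 2 + ‖s (x, t)‖ ^ 2 : ℝ) : ℂ) * u (x, t) = 0)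
      ∧
      (I * dt v x t + dxx v x t +
        2 * (σ : ℂ) * ((‖u (x, t)‖ ^ 2 + ‖v (x, t)‖ ^ 2
          + ‖w (x, t)‖ ^ 2 + ‖s (x, t)‖ ^ 2 : ℝ) : ℂ) * v (x, t) = 0)
      ∧
      (I * dt w x t + dxx w x t +
        2 * (σ : ℂ) * ((‖u (x, t)‖ ^ 2 + ‖v (x, t)‖ ^ 2
          + ‖w (x, t)‖ ^ 2 + ‖s (x, t)‖ ^ 2 : ℝ) : ℂ) * w (x, t) = 0)
      ∧
      (I * dt s x t + dxx s x t +
        2 * (σ : ℂ) * ((‖u (x, t)‖ ^ 2 + ‖v (x, t)‖ ^ 2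
          + ‖w (x, t)‖ ^ 2 + ‖s (x, t)‖ ^ 2 : ℝ) : ℂ) * s (x, t) = 0))
    ↔
    (∀ x t : ℝ,
      (I * dt u x t + dxx u x t +
        2 * (σ : ℂ) * ((‖u (x, t)‖ ^ 2 + ‖u (-x, -t)‖ ^ 2
          + ‖v (x, t)‖ ^ 2 + ‖v (-x, -t)‖ ^ 2 : ℝ) : ℂ) * u (x, t) = 0)
      ∧
      (I * dt v x t + dxx v x t +
        2 * (σ : ℂ) * ((‖u (x, t)‖ ^ 2 + ‖u (-x, -t)‖ ^ 2
          + ‖v (x, t)‖ ^ 2 + ‖v (-x, -t)‖ ^ 2 : ℝ) : ℂ) * v (x, t) = 0)) :=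
  four_component_iff_reverse_space_time_nonlocal_Manakov_general σ u v w s hw hs
end
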